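/- Let φ : (Y₁ ⇉ Y₀) ⟶ (X₁ ⇉ X₀) be a morphism of étale groupoids (in the topological or smooth setting) such that there exist morphisms ψ : Z ⟶ Y and ξ : U ⟶ Z with φ ∘ ψ and ψ ∘ ξ Morita equivalences. Then in the commutative square comparing Y₁ with the pullback of (s,t) : X₁ ⟶ X₀ × X₀ along φ₀ × φ₀, the induced comparison map γ : Y₁ ⟶ X₁ ×_{X₀ × X₀} (Y₀ × Y₀) is bijective. -/
import Mathlib


open Function

/-- A (topological) étale groupoid: a groupoid object in topological spaces whose
structure maps are étale (local homeomorphisms). -/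
structure EtaleGroupoid where
  /-- space of objects -/
  Obj : Type
  /-- space of arrows -/
  Mor : Type
  [topObj : TopologicalSpace Obj]
  [topMor : TopologicalSpace Mor]
  /-- source map -/
  s : Mor → Obj
  /-- target map -/
  t : Mor → Obj
  /-- unit map -/
  unit : Obj → Mor
  /-- inversion -/
  inv : Mor → Mor
  /-- composition `m g f` of `g` after `f`, defined when `s g = t f` -/
  m : (g f : Mor) → s g = t f → Mor
  s_unit : ∀ x, s (unit x) = x
  t_unit : ∀ x, t (unit x) = x
  s_m : ∀ g f h, s (m g f h) = s f
  t_m : ∀ g f h, t (m g f h) = t g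
  s_inv : ∀ g, s (inv g) = t g
  t_inv : ∀ g, t (inv g) = s g
  m_assoc : ∀ (h g f : Mor) (hhg : s h = t g) (hgf : s g = t f),
    m (m h g hhg) f ((s_m h g hhg).trans hgf) =
      m h (m g f hgf) (hhg.trans (t_m g f hgf).symm)
  m_unit : ∀ g, m g (unit (s g)) (t_unit (s g)).symm = g
  unit_m : ∀ g, m (unit (t g)) g (s_unit (t g)) = g
  inv_m : ∀ g, m (inv g) g (s_inv g) = unit (s g)
  m_inv : ∀ g, m g (inv g) (t_inv g).symm = unit (t g)
  continuous_s : Continuous s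
  continuous_t : Continuous t
  continuous_unit : Continuous unit
  continuous_inv : Continuous inv
  continuous_m : Continuous (fun p : {p : Mor × Mor // s p.1 = t p.2} => m p.1.1 p.1.2 p.2)
  etale_s : IsLocalHomeomorph s
  etale_t : IsLocalHomeomorph t

attribute [instance] EtaleGroupoid.topObj EtaleGroupoid.topMor

/-- A (continuous) morphism of étale groupoids. -/
structure EtaleGroupoid.Hom (G H : EtaleGroupoid) where
  /-- the map on objects -/
  obj : G.Obj → H.Obj
  /-- the map on arrows -/
  mor : G.Mor → H.Mor
  continuous_obj : Continuous obj
  continuous_mor : Continuous mor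
  s_comm : ∀ g, H.s (mor g) = obj (G.s g)
  t_comm : ∀ g, H.t (mor g) = obj (G.t g)
  unit_comm : ∀ x, mor (G.unit x) = H.unit (obj x)
  m_comm : ∀ (g f : G.Mor) (h : G.s g = G.t f),
    mor (G.m g f h) = H.m (mor g) (mor f)
      ((s_comm g).trans (congrArg obj h) |>.trans (t_comm f).symm)

/-- Composition of morphisms of étale groupoids: `φ.comp ψ` is `φ ∘ ψ`. -/
def EtaleGroupoid.Hom.comp {G H K : EtaleGroupoid} (φ : EtaleGroupoid.Hom H K)
    (ψ : EtaleGroupoid.Hom G H) : EtaleGroupoid.Hom G K where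
  obj := φ.obj ∘ ψ.obj
  mor := φ.mor ∘ ψ.mor
  continuous_obj := φ.continuous_obj.comp ψ.continuous_obj
  continuous_mor := φ.continuous_mor.comp ψ.continuous_mor
  s_comm g := by simp [φ.s_comm, ψ.s_comm]
  t_comm g := by simp [φ.t_comm, ψ.t_comm]
  unit_comm x := by simp [ψ.unit_comm, φ.unit_comm]
  m_comm g f h := by simp only [Function.comp_apply, ψ.m_comm, φ.m_comm]

/-- Condition (V1) of a Morita equivalence `φ : Y ⟶ X`: the map
`t ∘ pr₁ : X₁ ×_{s, X₀, φ₀} Y₀ ⟶ X₀` is a surjective open map. -/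
def EtaleGroupoid.Hom.EssSurj {Y X : EtaleGroupoid} (φ : EtaleGroupoid.Hom Y X) : Prop :=
  Surjective (fun p : {p : X.Mor × Y.Obj // X.s p.1 = φ.obj p.2} => X.t p.1.1) ∧
  IsOpenMap (fun p : {p : X.Mor × Y.Obj // X.s p.1 = φ.obj p.2} => X.t p.1.1)

/-- The canonical comparison map `γ : Y₁ ⟶ X₁ ×_{X₀ × X₀} (Y₀ × Y₀)` induced by
`φ₁` and `(s, t)`. -/
def EtaleGroupoid.Hom.compare {Y X : EtaleGroupoid} (φ : EtaleGroupoid.Hom Y X) :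
    Y.Mor → {p : X.Mor × (Y.Obj × Y.Obj) //
      X.s p.1 = φ.obj p.2.1 ∧ X.t p.1 = φ.obj p.2.2} :=
  fun g => ⟨(φ.mor g, (Y.s g, Y.t g)), φ.s_comm g, φ.t_comm g⟩

/-- Condition (V2) of a Morita equivalence: the square comparing `Y₁` with the pullback of
`(s, t) : X₁ ⟶ X₀ × X₀` along `φ₀ × φ₀` is cartesian, i.e. the comparison map is a
homeomorphism. -/
def EtaleGroupoid.Hom.FullyFaithful {Y X : EtaleGroupoid}
    (φ : EtaleGroupoid.Hom Y X) : Prop :=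
  IsHomeomorph φ.compare

/-- A morphism of étale groupoids is a Morita (essential) equivalence if it satisfies
conditions (V1) and (V2). -/
def EtaleGroupoid.Hom.IsMorita {Y X : EtaleGroupoid}
    (φ : EtaleGroupoid.Hom Y X) : Prop :=
  φ.EssSurj ∧ φ.FullyFaithful

namespace EtaleGroupoid

theorem m_congr (G : EtaleGroupoid) {a a' b b' : G.Mor} (ha : a = a') (hb : b = b')
    (h : G.s a = G.t b) :
    G.m a b h = G.m a' b' (ha ▸ hb ▸ h) := by subst ha; subst hb; rfl

/-- `p⁻¹ (p a) = a`. -/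
theorem inv_m_cancel (G : EtaleGroupoid) {p a : G.Mor} (h1 : G.s p = G.t a)
    (pf : G.s (G.inv p) = G.t (G.m p a h1)) :
    G.m (G.inv p) (G.m p a h1) pf = a := by
  calc G.m (G.inv p) (G.m p a h1) pf
      = G.m (G.m (G.inv p) p (G.s_inv p)) a ((G.s_m _ _ _).trans h1) :=
        (G.m_assoc _ _ _ _ _).symm
    _ = G.m (G.unit (G.t a)) a (G.s_unit _) := by
        exact G.m_congr (by rw [G.inv_m, h1]) rfl _
    _ = a := G.unit_m a

/-- `(a q) q⁻¹ = a`. -/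
theorem m_inv_cancel (G : EtaleGroupoid) {a q : G.Mor} (h1 : G.s a = G.t q)
    (pf : G.s (G.m a q h1) = G.t (G.inv q)) :
    G.m (G.m a q h1) (G.inv q) pf = a := by
  calc G.m (G.m a q h1) (G.inv q) pf
      = G.m a (G.m q (G.inv q) (G.t_inv q).symm) (h1.trans (G.t_m _ _ _).symm) :=
        G.m_assoc _ _ _ _ _
    _ = G.m a (G.unit (G.s a)) (G.t_unit _).symm := by
        exact G.m_congr rfl (by rw [G.m_inv, h1]) _
    _ = a := G.m_unit a

/-- `p (p⁻¹ a) = a`. -/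
theorem m_inv_cancel' (G : EtaleGroupoid) {p a : G.Mor} (h1 : G.s (G.inv p) = G.t a)
    (pf : G.s p = G.t (G.m (G.inv p) a h1)) :
    G.m p (G.m (G.inv p) a h1) pf = a := by
  calc G.m p (G.m (G.inv p) a h1) pf
      = G.m (G.m p (G.inv p) (G.t_inv p).symm) a ((G.s_m _ _ _).trans h1) :=
        (G.m_assoc _ _ _ _ _).symm
    _ = G.m (G.unit (G.t a)) a (G.s_unit _) := by
        exact G.m_congr (by rw [G.m_inv]; rw [(G.s_inv p).symm.trans h1]) rfl _
    _ = a := G.unit_m a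

theorem cancel_left (G : EtaleGroupoid) {p a b : G.Mor} (h1 : G.s p = G.t a)
    (h2 : G.s p = G.t b) (h : G.m p a h1 = G.m p b h2) : a = b := by
  have := G.m_congr (rfl (a := G.inv p)) h
    ((G.s_inv p).trans (G.t_m _ _ _).symm)
  rwa [G.inv_m_cancel h1, G.inv_m_cancel h2] at this

theorem cancel_right (G : EtaleGroupoid) {a b q : G.Mor} (h1 : G.s a = G.t q)
    (h2 : G.s b = G.t q) (h : G.m a q h1 = G.m b q h2) : a = b := by
  have := G.m_congr h (rfl (a := G.inv q))
    ((G.s_m _ _ _).trans (G.t_inv q).symm)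
  rwa [G.m_inv_cancel h1, G.m_inv_cancel h2] at this

theorem inv_unique (G : EtaleGroupoid) {a g : G.Mor} (h : G.s a = G.t g)
    (hm : G.m a g h = G.unit (G.s g)) : a = G.inv g := by
  have h1 : G.s (G.m a g h) = G.t (G.inv g) := (G.s_m _ _ _).trans (G.t_inv g).symm
  calc a = G.m (G.m a g h) (G.inv g) h1 := (G.m_inv_cancel h h1).symm
    _ = G.m (G.unit (G.t (G.inv g))) (G.inv g) (G.s_unit _) := by
        exact G.m_congr (hm.trans (by rw [G.t_inv])) rfl _
    _ = G.inv g := G.unit_m _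

theorem Hom.inv_comm {G H : EtaleGroupoid} (φ : EtaleGroupoid.Hom G H) (g : G.Mor) :
    φ.mor (G.inv g) = H.inv (φ.mor g) := by
  apply H.inv_unique ((φ.s_comm _).trans ((congrArg φ.obj (G.s_inv g)).trans
    (φ.t_comm g).symm))
  calc H.m (φ.mor (G.inv g)) (φ.mor g) _
      = φ.mor (G.m (G.inv g) g (G.s_inv g)) := (φ.m_comm _ _ _).symm
    _ = φ.mor (G.unit (G.s g)) := by rw [G.inv_m]
    _ = H.unit (H.s (φ.mor g)) := by rw [φ.unit_comm, φ.s_comm]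

/-- `q ((q⁻¹ (f p)) p⁻¹) = f`. -/
theorem conj_eq (G : EtaleGroupoid) (f p q : G.Mor) (h1 : G.s f = G.t p)
    (h2 : G.s (G.inv q) = G.t (G.m f p h1))
    (pf3 : G.s (G.m (G.inv q) (G.m f p h1) h2) = G.t (G.inv p))
    (pf4 : G.s q = G.t (G.m (G.m (G.inv q) (G.m f p h1) h2) (G.inv p) pf3)) :
    G.m q (G.m (G.m (G.inv q) (G.m f p h1) h2) (G.inv p) pf3) pf4 = f := by
  have e1 : G.s (G.m f p h1) = G.t (G.inv p) := (G.s_m _ _ _).trans (G.t_inv p).symm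
  calc G.m q (G.m (G.m (G.inv q) (G.m f p h1) h2) (G.inv p) pf3) pf4
      = G.m q (G.m (G.inv q) (G.m (G.m f p h1) (G.inv p) e1)
          (h2.trans (G.t_m _ _ _).symm)) (by rw [G.t_m, G.t_inv]) := by
        exact G.m_congr rfl (G.m_assoc _ _ _ _ _) _
    _ = G.m q (G.m (G.inv q) f (h2.trans (G.t_m f p h1)))
          (by rw [G.t_m, G.t_inv]) := by
        exact G.m_congr rfl (G.m_congr rfl (G.m_inv_cancel h1 e1) _) _
    _ = f := G.m_inv_cancel' _ _

end EtaleGroupoid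

/-- If `φ : Y ⟶ X` is a morphism of étale groupoids admitting `ψ : Z ⟶ Y` and
`ξ : U ⟶ Z` with `φ ∘ ψ` and `ψ ∘ ξ` Morita equivalences, then the canonical comparison
map `γ : Y₁ ⟶ X₁ ×_{X₀ × X₀} (Y₀ × Y₀)` is bijective. -/
theorem compare_bijective_of_comp_comp {X Y Z U : EtaleGroupoid}
    (φ : EtaleGroupoid.Hom Y X) (ψ : EtaleGroupoid.Hom Z Y) (ξ : EtaleGroupoid.Hom U Z)
    (hφψ : (φ.comp ψ).IsMorita) (hψξ : (ψ.comp ξ).IsMorita) :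
    Function.Bijective φ.compare := by
  constructor
  · -- injectivity
    intro g g' hgg'
    have h1 : φ.mor g = φ.mor g' := congrArg (fun p => p.1.1) hgg'
    have h2 : Y.s g = Y.s g' := congrArg (fun p => p.1.2.1) hgg'
    have h3 : Y.t g = Y.t g' := congrArg (fun p => p.1.2.2) hgg'
    obtain ⟨⟨⟨k, u⟩, hk⟩, hk2⟩ := hψξ.1.1 (Y.s g)
    obtain ⟨⟨⟨k', u'⟩, hk'⟩, hk'2⟩ := hψξ.1.1 (Y.t g)
    replace hk : Y.s k = (ψ.comp ξ).obj u := hk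
    replace hk2 : Y.t k = Y.s g := hk2
    replace hk' : Y.s k' = (ψ.comp ξ).obj u' := hk'
    replace hk'2 : Y.t k' = Y.t g := hk'2
    have hgk : Y.s g = Y.t k := hk2.symm
    have hg'k : Y.s g' = Y.t k := h2.symm.trans hgk
    have hA : Y.s (Y.inv k') = Y.t (Y.m g k hgk) := by
      rw [Y.s_inv, Y.t_m, hk'2]
    have hA' : Y.s (Y.inv k') = Y.t (Y.m g' k hg'k) := by
      rw [Y.s_inv, Y.t_m, hk'2, h3]
    -- the two conjugated arrows
    have pf1 : Y.s (Y.m (Y.inv k') (Y.m g k hgk) hA) = (ψ.comp ξ).obj u := by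
      rw [Y.s_m, Y.s_m]; exact hk
    have pf2 : Y.t (Y.m (Y.inv k') (Y.m g k hgk) hA) = (ψ.comp ξ).obj u' := by
      rw [Y.t_m, Y.t_inv]; exact hk'
    have pf1' : Y.s (Y.m (Y.inv k') (Y.m g' k hg'k) hA') = (ψ.comp ξ).obj u := by
      rw [Y.s_m, Y.s_m]; exact hk
    have pf2' : Y.t (Y.m (Y.inv k') (Y.m g' k hg'k) hA') = (ψ.comp ξ).obj u' := by
      rw [Y.t_m, Y.t_inv]; exact hk'
    obtain ⟨w, hw⟩ := hψξ.2.bijective.surjective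
      ⟨(Y.m (Y.inv k') (Y.m g k hgk) hA, (u, u')), pf1, pf2⟩
    obtain ⟨w', hw'⟩ := hψξ.2.bijective.surjective
      ⟨(Y.m (Y.inv k') (Y.m g' k hg'k) hA', (u, u')), pf1', pf2'⟩
    have hw1 : (ψ.comp ξ).mor w = Y.m (Y.inv k') (Y.m g k hgk) hA :=
      congrArg (fun p => p.1.1) hw
    have hwu : U.s w = u := congrArg (fun p => p.1.2.1) hw
    have hwu' : U.t w = u' := congrArg (fun p => p.1.2.2) hw
    have hw'1 : (ψ.comp ξ).mor w' = Y.m (Y.inv k') (Y.m g' k hg'k) hA' :=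
      congrArg (fun p => p.1.1) hw'
    have hw'u : U.s w' = u := congrArg (fun p => p.1.2.1) hw'
    have hw'u' : U.t w' = u' := congrArg (fun p => p.1.2.2) hw'
    -- φ applied to the conjugates agree
    have hmor : φ.mor (Y.m (Y.inv k') (Y.m g k hgk) hA) =
        φ.mor (Y.m (Y.inv k') (Y.m g' k hg'k) hA') := by
      calc φ.mor (Y.m (Y.inv k') (Y.m g k hgk) hA)
          = X.m (φ.mor (Y.inv k')) (φ.mor (Y.m g k hgk)) _ := φ.m_comm _ _ _
        _ = X.m (φ.mor (Y.inv k')) (φ.mor (Y.m g' k hg'k))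
              (by rw [φ.s_comm, φ.t_comm, Y.s_inv, Y.t_m, hk'2, h3]) := by
            refine X.m_congr rfl ?_ _
            rw [φ.m_comm, φ.m_comm]
            exact X.m_congr h1 rfl _
        _ = φ.mor (Y.m (Y.inv k') (Y.m g' k hg'k) hA') := (φ.m_comm _ _ _).symm
    have key : (φ.comp ψ).compare (ξ.mor w) = (φ.comp ψ).compare (ξ.mor w') := by
      apply Subtype.ext
      have c1 : (φ.comp ψ).mor (ξ.mor w) = (φ.comp ψ).mor (ξ.mor w') := by
        show φ.mor ((ψ.comp ξ).mor w) = φ.mor ((ψ.comp ξ).mor w')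
        rw [hw1, hw'1]; exact hmor
      have c2 : Z.s (ξ.mor w) = Z.s (ξ.mor w') := by
        rw [ξ.s_comm, ξ.s_comm, hwu, hw'u]
      have c3 : Z.t (ξ.mor w) = Z.t (ξ.mor w') := by
        rw [ξ.t_comm, ξ.t_comm, hwu', hw'u']
      exact Prod.ext c1 (Prod.ext c2 c3)
    have hzz : ξ.mor w = ξ.mor w' := hφψ.2.bijective.injective key
    have hhh : Y.m (Y.inv k') (Y.m g k hgk) hA = Y.m (Y.inv k') (Y.m g' k hg'k) hA' := by
      rw [← hw1, ← hw'1]; show ψ.mor (ξ.mor w) = ψ.mor (ξ.mor w'); rw [hzz]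
    exact Y.cancel_right hgk hg'k (Y.cancel_left hA hA' hhh)
  · -- surjectivity
    rintro ⟨⟨f, y, y'⟩, hf1, hf2⟩
    obtain ⟨⟨⟨k, u⟩, hk⟩, hk2⟩ := hψξ.1.1 y
    obtain ⟨⟨⟨k', u'⟩, hk'⟩, hk'2⟩ := hψξ.1.1 y'
    replace hk : Y.s k = (ψ.comp ξ).obj u := hk
    replace hk2 : Y.t k = y := hk2
    replace hk' : Y.s k' = (ψ.comp ξ).obj u' := hk'
    replace hk'2 : Y.t k' = y' := hk'2
    have e1 : X.s f = X.t (φ.mor k) := by rw [φ.t_comm, hk2]; exact hf1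
    have e2 : X.s (X.inv (φ.mor k')) = X.t (X.m f (φ.mor k) e1) := by
      rw [X.s_inv, X.t_m, φ.t_comm, hk'2]; exact hf2.symm
    have pf1 : X.s (X.m (X.inv (φ.mor k')) (X.m f (φ.mor k) e1) e2) =
        (φ.comp ψ).obj (ξ.obj u) := by
      show _ = φ.obj (ψ.obj (ξ.obj u))
      rw [X.s_m, X.s_m, φ.s_comm]
      exact congrArg φ.obj hk
    have pf2 : X.t (X.m (X.inv (φ.mor k')) (X.m f (φ.mor k) e1) e2) =
        (φ.comp ψ).obj (ξ.obj u') := by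
      show _ = φ.obj (ψ.obj (ξ.obj u'))
      rw [X.t_m, X.t_inv, φ.s_comm]
      exact congrArg φ.obj hk'
    obtain ⟨z, hz⟩ := hφψ.2.bijective.surjective
      ⟨(X.m (X.inv (φ.mor k')) (X.m f (φ.mor k) e1) e2, (ξ.obj u, ξ.obj u')), pf1, pf2⟩
    have hz1 : (φ.comp ψ).mor z = X.m (X.inv (φ.mor k')) (X.m f (φ.mor k) e1) e2 :=
      congrArg (fun p => p.1.1) hz
    have hz2 : Z.s z = ξ.obj u := congrArg (fun p => p.1.2.1) hz
    have hz3 : Z.t z = ξ.obj u' := congrArg (fun p => p.1.2.2) hz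
    have hh1 : Y.s (ψ.mor z) = Y.s k := by
      rw [ψ.s_comm, hz2]; exact hk.symm
    have hh2 : Y.t (ψ.mor z) = Y.s k' := by
      rw [ψ.t_comm, hz3]; exact hk'.symm
    have e3 : Y.s (ψ.mor z) = Y.t (Y.inv k) := hh1.trans (Y.t_inv k).symm
    have e4 : Y.s k' = Y.t (Y.m (ψ.mor z) (Y.inv k) e3) := by
      rw [Y.t_m]; exact hh2.symm
    refine ⟨Y.m k' (Y.m (ψ.mor z) (Y.inv k) e3) e4, ?_⟩
    apply Subtype.ext
    have c2 : Y.s (Y.m k' (Y.m (ψ.mor z) (Y.inv k) e3) e4) = y := by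
      rw [Y.s_m, Y.s_m, Y.s_inv]; exact hk2
    have c3 : Y.t (Y.m k' (Y.m (ψ.mor z) (Y.inv k) e3) e4) = y' := by
      rw [Y.t_m]; exact hk'2
    have c1 : φ.mor (Y.m k' (Y.m (ψ.mor z) (Y.inv k) e3) e4) = f := by
      have step : φ.mor (Y.m k' (Y.m (ψ.mor z) (Y.inv k) e3) e4) =
          X.m (φ.mor k') (X.m (X.m (X.inv (φ.mor k')) (X.m f (φ.mor k) e1) e2)
            (X.inv (φ.mor k)) (by rw [X.s_m, X.s_m, X.t_inv]))
            (by rw [X.t_m, X.t_m, X.t_inv]) := by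
        calc φ.mor (Y.m k' (Y.m (ψ.mor z) (Y.inv k) e3) e4)
            = X.m (φ.mor k') (φ.mor (Y.m (ψ.mor z) (Y.inv k) e3)) _ := φ.m_comm _ _ _
          _ = _ := by
              refine X.m_congr rfl ?_ _
              rw [φ.m_comm]
              exact X.m_congr hz1 (φ.inv_comm k) _
      exact step.trans (X.conj_eq f (φ.mor k) (φ.mor k') e1 e2 _ _)
    exact Prod.ext c1 (Prod.ext c2 c3)
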